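/- Let (B, ω) be a symplectic vector space, A ⊆ B a subspace, and v ∈ A^⊥ω \ A. Then A ⊆ v^⊥ω, and any codimension-1 subspace C of v^⊥ω that contains A and does not contain v is ω-orthogonal to v. Moreover if A is not coisotropic and codim A ≥ 3, such a C of codimension 2 in B exists and is symplectic. -/

import Mathlib

/-!
Since `ω` is nondegenerate, `A^⊥ω^⊥ω = A`, so `v ∉ A` gives `w ∈ A^⊥ω` with
`ω w v ≠ 0`. The plane `W = span {w, v}` is then symplectic, hence `B = W ⊕ W^⊥ω` and
`C = W^⊥ω` is symplectic too. It has codimension 2, contains `A` because `v, w ∈ A^⊥ω`,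
and misses `v` because `ω w v ≠ 0`.
-/

namespace LinearMap.BilinForm

open Module Submodule

variable {K V : Type*} [Field K] [AddCommGroup V] [Module K V] {B : LinearMap.BilinForm K V}

theorem IsRefl.le_orthogonal_comm (hB : B.IsRefl) {N L : Submodule K V} :
    N ≤ B.orthogonal L ↔ L ≤ B.orthogonal N :=
  ⟨fun h _ hl _ hn => hB _ _ (h hn _ hl), fun h _ hn _ hl => hB _ _ (h hl _ hn)⟩

theorem exists_mem_orthogonal_apply_ne_zero [FiniteDimensional K V] (hB : B.Nondegenerate)
    (hr : B.IsRefl) {A : Submodule K V} {v : V} (hvA : v ∉ A) :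
    ∃ w ∈ B.orthogonal A, B w v ≠ 0 := by
  contrapose! hvA
  rw [← B.orthogonal_orthogonal hB hr A]
  exact hvA

theorem restrict_orthogonal_nondegenerate [FiniteDimensional K V] (hB : B.Nondegenerate)
    (hr : B.IsRefl) {W : Submodule K V} (hW : (B.restrict W).Nondegenerate) :
    (B.restrict (B.orthogonal W)).Nondegenerate := by
  rw [restrict_nondegenerate_iff_isCompl_orthogonal hr, B.orthogonal_orthogonal hB hr]
  exact (isCompl_orthogonal_of_restrict_nondegenerate hr hW).symm

namespace IsAlt

variable {v w : V}

theorem eq_zero_of_orthogonal_pair (hB : B.IsAlt) (hvw : B v w ≠ 0) {a b : K}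
    (hv : B v (a • v + b • w) = 0) (hw : B w (a • v + b • w) = 0) : a = 0 ∧ b = 0 := by
  have hwv : B w v ≠ 0 := fun h => hvw (hB.eq_iff.mp h)
  simp only [map_add, map_smul, smul_eq_mul, hB v, hB w, mul_zero, add_zero, zero_add] at hv hw
  exact ⟨(mul_eq_zero.mp hw).resolve_right hwv, (mul_eq_zero.mp hv).resolve_right hvw⟩

theorem finrank_span_pair (hB : B.IsAlt) (hvw : B v w ≠ 0) : finrank K (span K {v, w}) = 2 := by
  have hind : LinearIndependent K ![v, w] := by
    refine LinearIndependent.pair_iff.mpr fun a b hab => ?_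
    exact eq_zero_of_orthogonal_pair hB hvw (by simp [hab]) (by simp [hab])
  rw [← Matrix.range_cons_cons_empty, finrank_span_eq_card hind, Fintype.card_fin]

theorem restrict_span_pair_nondegenerate (hB : B.IsAlt) (hvw : B v w ≠ 0) :
    (B.restrict (span K {v, w})).Nondegenerate := by
  refine nondegenerate_restrict_of_disjoint_orthogonal B hB.isRefl ?_
  refine disjoint_def.mpr fun x hx hxo => ?_
  obtain ⟨a, b, rfl⟩ := mem_span_pair.mp hx
  obtain ⟨rfl, rfl⟩ := eq_zero_of_orthogonal_pair hB hvw
    (hxo v (subset_span (by simp))) (hxo w (subset_span (by simp)))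
  simp

end IsAlt

end LinearMap.BilinForm

open LinearMap.BilinForm Submodule in
theorem stmt1_general {B : Type*} [AddCommGroup B] [Module ℝ B] [FiniteDimensional ℝ B]
    (ω : LinearMap.BilinForm ℝ B)
    (hnd : ω.Nondegenerate)
    (halt : ∀ v : B, ω v v = 0)
    (A : Submodule ℝ B) (v : B)
    (hv : v ∈ ω.orthogonal A) (hvA : v ∉ A) :
    A ≤ ω.orthogonal (Submodule.span ℝ {v}) ∧
    (∀ C : Submodule ℝ B, A ≤ C → C ≤ ω.orthogonal (Submodule.span ℝ {v}) →
      v ∉ C → ∀ c ∈ C, ω v c = 0) ∧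
    (∃ C : Submodule ℝ B, A ≤ C ∧ C ≤ ω.orthogonal (Submodule.span ℝ {v}) ∧
      v ∉ C ∧ Module.finrank ℝ C + 2 = Module.finrank ℝ B ∧
      (ω.restrict C).Nondegenerate) := by
  have halt : ω.IsAlt := halt
  have hrefl := halt.isRefl
  obtain ⟨w, hwA, hwv⟩ := exists_mem_orthogonal_apply_ne_zero hnd hrefl hvA
  refine ⟨hrefl.le_orthogonal_comm.mpr (span_le.mpr (Set.singleton_subset_iff.mpr hv)),
    fun C _ hC _ c hc => hC hc v (mem_span_singleton_self v),
    ω.orthogonal (span ℝ {w, v}), ?_, ?_, fun hvC => hwv (hvC w (subset_span (by simp))), ?_,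
    restrict_orthogonal_nondegenerate hnd hrefl (halt.restrict_span_pair_nondegenerate hwv)⟩
  · exact hrefl.le_orthogonal_comm.mpr
      (span_le.mpr (Set.insert_subset hwA (Set.singleton_subset_iff.mpr hv)))
  · exact LinearMap.BilinForm.orthogonal_le (span_mono (Set.subset_insert w {v}))
  · have hW := (span ℝ {w, v}).finrank_le
    have h2 := halt.finrank_span_pair hwv
    have hC := finrank_orthogonal hnd (span ℝ {w, v})
    omega

/-- If `v ∈ A^⊥ω \ A`, then `A ⊆ v^⊥ω`; any subspace `C` of `v^⊥ω`
containing `A` with `v ∉ C` is `ω`-orthogonal to `v`; and if moreover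
`codim A ≥ 3` (so that `A` is not coisotropic thanks to `v`), there is such a `C`
of codimension 2 in `B` which is symplectic. -/
theorem stmt1 {B : Type*} [AddCommGroup B] [Module ℝ B] [FiniteDimensional ℝ B]
    (ω : LinearMap.BilinForm ℝ B)
    (hnd : ω.Nondegenerate)
    (halt : ∀ v : B, ω v v = 0)
    (A : Submodule ℝ B) (v : B)
    (hv : v ∈ ω.orthogonal A) (hvA : v ∉ A)
    (hcodim : Module.finrank ℝ A + 3 ≤ Module.finrank ℝ B) :
    A ≤ ω.orthogonal (Submodule.span ℝ {v}) ∧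
    (∀ C : Submodule ℝ B, A ≤ C → C ≤ ω.orthogonal (Submodule.span ℝ {v}) →
      v ∉ C → ∀ c ∈ C, ω v c = 0) ∧
    (∃ C : Submodule ℝ B, A ≤ C ∧ C ≤ ω.orthogonal (Submodule.span ℝ {v}) ∧
      v ∉ C ∧ Module.finrank ℝ C + 2 = Module.finrank ℝ B ∧
      (ω.restrict C).Nondegenerate) :=
  stmt1_general ω hnd halt A v hv hvA
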